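/- arXiv:1605.02898 — 2 statements merged into one kernel-verified Lean document; each statement's English description precedes it below -/
import Mathlib

section
/- (Premet) Let g, f, I, M, W̃ be as in the general finite W-algebra setup. Let w₁, w₂ ∈ W̃ and suppose w₁ = Σ_a A_a p_a and w₂ = Σ_b B_b q_b are finite sums with A_a, B_b in the unital subalgebra of U(g) generated by g_{≤0} and p_a, q_b in the unital subalgebra of U(g) generated by g_{≥1/2}. Then w₁·w₂·1̄ = Σ_{a,b} A_a B_b q_b p_a 1̄ in M. (This expresses that the map ρ : W̃ → U(g_{≤0}) ⊗ F^{op}(g_{1/2}) is an algebra homomorphism, where F^{op}(g_{1/2}) carries the opposite product.) -/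
/-!
The generators `ι m - (f|m)`, `m ∈ g_{≥1}`, of `I` have commutators with `ι(g_{≥1/2})` in
`ι(g_{≥3/2})`, and `ι(g_{≥3/2}) ⊆ I` because `f ∈ g_{-1}` is orthogonal to `g_{≥3/2}`. Hence
`ι(g_{≥1/2})` commutes with `I` modulo `I`, so `I` is stable under right multiplication by the
subalgebra `P` generated by `g_{≥1/2}`; together with `w₂ ∈ W̃` this makes `p w₂ - w₂ p ∈ I` for
every `p ∈ P`. Finally `w₁ w₂ - Σ A_a B_b q_b p_a = Σ_a A_a (p_a w₂ - w₂ p_a)`.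
-/

namespace Ideal

variable {A : Type*} [Ring A]

theorem commutator_mem_span {s : Set A} {c : A} (hs : ∀ x ∈ s, c * x - x * c ∈ span s)
    {j : A} (hj : j ∈ span s) : c * j - j * c ∈ span s := by
  induction hj using Submodule.span_induction with
  | mem x hx => exact hs x hx
  | zero => simp
  | add x y _ _ hx hy =>
    rw [show c * (x + y) - (x + y) * c = (c * x - x * c) + (c * y - y * c) by noncomm_ring]
    exact add_mem hx hy
  | smul r x hx' hx =>
    rw [show c * (r • x) - (r • x) * c = r * (c * x - x * c) + (c * r - r * c) * x by
      simp only [smul_eq_mul]; noncomm_ring]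
    exact add_mem (mul_mem_left _ r hx) (mul_mem_left _ _ hx')

theorem sum_mul_sub_sum_sum_mem {α β : Type*} [Fintype α] [Fintype β] {a p : α → A}
    {c q : β → A} {I : Ideal A} {w : A} (hw : w = ∑ j, c j * q j)
    (hp : ∀ i, p i * w - w * p i ∈ I) :
    (∑ i, a i * p i) * w - ∑ i, ∑ j, a i * c j * q j * p i ∈ I := by
  have hcq : ∀ i, ∑ j, a i * c j * q j * p i = a i * (w * p i) := fun i => by
    simp only [hw, Finset.sum_mul, Finset.mul_sum, mul_assoc]
  rw [Finset.sum_congr rfl fun i _ => hcq i, Finset.sum_mul, ← Finset.sum_sub_distrib]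
  refine I.sum_mem fun i _ => ?_
  rw [mul_assoc, ← mul_sub]
  exact I.mul_mem_left (a i) (hp i)

variable (R : Type*) [CommSemiring R] [Algebra R A] (I : Ideal A)

/-- The largest subalgebra in which the left ideal `I` is a two-sided ideal. -/
def rightIdealizer : Subalgebra R A where
  carrier := {y | ∀ j ∈ I, j * y ∈ I}
  mul_mem' {x y} hx hy j hj := by rw [← mul_assoc]; exact hy _ (hx j hj)
  add_mem' {x y} hx hy j hj := by rw [mul_add]; exact add_mem (hx j hj) (hy j hj)
  algebraMap_mem' r j hj := by rw [← Algebra.commutes]; exact I.mul_mem_left _ hj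

variable {R I}

theorem mem_rightIdealizer_of_commutator_mem {x : A} (h : ∀ j ∈ I, x * j - j * x ∈ I) :
    x ∈ I.rightIdealizer R := fun j hj => by
  rw [show j * x = x * j - (x * j - j * x) by abel]
  exact sub_mem (I.mul_mem_left x hj) (h j hj)

theorem commutator_mem_of_mem_adjoin {s : Set A} (hs : s ⊆ I.rightIdealizer R) {w : A}
    (hw : ∀ x ∈ s, x * w - w * x ∈ I) {x : A} (hx : x ∈ Algebra.adjoin R s) :
    x * w - w * x ∈ I := by
  induction hx using Algebra.adjoin_induction with
  | mem x hx => exact hw x hx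
  | algebraMap r => simp [Algebra.commutes]
  | add x y _ _ hx hy =>
    rw [show (x + y) * w - w * (x + y) = (x * w - w * x) + (y * w - w * y) by noncomm_ring]
    exact add_mem hx hy
  | mul x y _ hy' hx hy =>
    rw [show x * y * w - w * (x * y) = x * (y * w - w * y) + (x * w - w * x) * y by
      noncomm_ring]
    exact add_mem (I.mul_mem_left x hy) (Algebra.adjoin_le hs hy' _ hx)

end Ideal

theorem UniversalEnvelopingAlgebra.ι_lie {R L : Type*} [CommRing R] [LieRing L] [LieAlgebra R L]
    (x y : L) : ι R ⁅x, y⁆ = ι R x * ι R y - ι R y * ι R x := by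
  let := LieRing.ofAssociativeRing (A := UniversalEnvelopingAlgebra R L)
  rw [LieHom.map_lie, Ring.lie_def]

section GradedPieces

variable {R M N : Type*} [Semiring R] [AddCommMonoid M] [Module R M] [AddCommMonoid N]
  [Module R N] (gr : ℤ → Submodule R M)

theorem mem_iSup_ge_of_mem {d k : ℤ} (hk : d ≤ k) {x : M} (hx : x ∈ gr k) :
    x ∈ ⨆ k ≥ d, gr k :=
  Submodule.mem_iSup_of_mem k (Submodule.mem_iSup_of_mem hk hx)

theorem map_mem_of_mem_iSup_ge {φ : M →ₗ[R] N} {T : Submodule R N} {d : ℤ}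
    (h : ∀ k ≥ d, ∀ x ∈ gr k, φ x ∈ T) {x : M} (hx : x ∈ ⨆ k ≥ d, gr k) : φ x ∈ T :=
  (iSup₂_le fun k hk y hy => h k hk y hy : ⨆ k ≥ d, gr k ≤ T.comap φ) hx

end GradedPieces

section WhittakerIdeal

variable {R g : Type*} [CommRing R] [LieRing g] [LieAlgebra R g] {gr : ℤ → Submodule R g}

open UniversalEnvelopingAlgebra

theorem lie_mem_iSup_ge (hbr : ∀ (d e : ℤ), ∀ x ∈ gr d, ∀ y ∈ gr e, ⁅x, y⁆ ∈ gr (d + e))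
    {d e : ℤ} {x y : g} (hx : x ∈ ⨆ k ≥ d, gr k) (hy : y ∈ ⨆ k ≥ e, gr k) :
    ⁅x, y⁆ ∈ ⨆ k ≥ d + e, gr k := by
  refine map_mem_of_mem_iSup_ge gr
    (φ := (LieModule.toEnd R g g : g →ₗ[R] Module.End R g).flip y) (fun k hk x hx => ?_) hx
  refine map_mem_of_mem_iSup_ge gr (φ := LieModule.toEnd R g g x) (fun l hl y hy => ?_) hy
  exact mem_iSup_ge_of_mem gr (by omega) (hbr k l x hx y hy)

variable (B : LinearMap.BilinForm R g) (gr) (f : g)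

/-- The ideal `I` of the statement; as `U(g)` is noncommutative, `Ideal` means left ideal. -/
def whittakerIdeal : Ideal (UniversalEnvelopingAlgebra R g) :=
  Ideal.span {x | ∃ m ∈ (⨆ k ≥ (2 : ℤ), gr k), x = ι R m - algebraMap R _ (B f m)}

variable {B gr f}

theorem bilin_eq_zero_of_mem_iSup_ge_three
    (horth : ∀ (d e : ℤ), d + e ≠ 0 → ∀ x ∈ gr d, ∀ y ∈ gr e, B x y = 0) (hf : f ∈ gr (-2))
    {m : g} (hm : m ∈ ⨆ k ≥ 3, gr k) : B f m = 0 :=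
  (Submodule.mem_bot R).mp <| map_mem_of_mem_iSup_ge gr
    (fun k hk x hx => (Submodule.mem_bot R).mpr (horth (-2) k (by omega) f hf x hx)) hm

theorem ι_mem_whittakerIdeal
    (horth : ∀ (d e : ℤ), d + e ≠ 0 → ∀ x ∈ gr d, ∀ y ∈ gr e, B x y = 0) (hf : f ∈ gr (-2))
    {m : g} (hm : m ∈ ⨆ k ≥ 3, gr k) : ι R m ∈ whittakerIdeal gr B f := by
  have hgen : ι R m - algebraMap R _ (B f m) ∈ whittakerIdeal gr B f :=
    Ideal.subset_span ⟨m, (biSup_mono fun k (hk : k ≥ 3) => by omega :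
      ⨆ k ≥ 3, gr k ≤ ⨆ k ≥ 2, gr k) hm, rfl⟩
  rwa [bilin_eq_zero_of_mem_iSup_ge_three horth hf hm, map_zero, sub_zero] at hgen

theorem ι_mem_rightIdealizer_whittakerIdeal
    (hbr : ∀ (d e : ℤ), ∀ x ∈ gr d, ∀ y ∈ gr e, ⁅x, y⁆ ∈ gr (d + e))
    (horth : ∀ (d e : ℤ), d + e ≠ 0 → ∀ x ∈ gr d, ∀ y ∈ gr e, B x y = 0) (hf : f ∈ gr (-2))
    {a : g} (ha : a ∈ ⨆ k ≥ 1, gr k) : ι R a ∈ (whittakerIdeal gr B f).rightIdealizer R := by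
  refine Ideal.mem_rightIdealizer_of_commutator_mem fun j hj => Ideal.commutator_mem_span ?_ hj
  rintro _ ⟨m, hm, rfl⟩
  rw [show ι R a * (ι R m - algebraMap R _ (B f m)) - (ι R m - algebraMap R _ (B f m)) * ι R a =
      ι R ⁅a, m⁆ by rw [ι_lie, mul_sub, sub_mul, Algebra.commutes]; abel]
  -- with `3` in place of `1 + 2`, unifying `?d + ?e =?= 3` makes elaboration time out
  have h3 : ⁅a, m⁆ ∈ ⨆ k ≥ 1 + 2, gr k := lie_mem_iSup_ge hbr ha hm
  exact ι_mem_whittakerIdeal horth hf h3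

end WhittakerIdeal

/- `gr d` is the component `g_{d/2}` of the `½ℤ`-grading, and `I = whittakerIdeal gr B f`. -/
theorem stmt_11_general {𝔽 : Type*} [Field 𝔽]
    {g : Type*} [LieRing g] [LieAlgebra 𝔽 g]
    (B : LinearMap.BilinForm 𝔽 g)
    (gr : ℤ → Submodule 𝔽 g)
    (hbr : ∀ (d e : ℤ), ∀ x ∈ gr d, ∀ y ∈ gr e, ⁅x, y⁆ ∈ gr (d + e))
    (horth : ∀ (d e : ℤ), d + e ≠ 0 → ∀ x ∈ gr d, ∀ y ∈ gr e, B x y = 0)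
    (f : g) (hf : f ∈ gr (-2))
    (I : Ideal (UniversalEnvelopingAlgebra 𝔽 g))
    (hI : I = Ideal.span {x | ∃ m ∈ (⨆ k ≥ (2 : ℤ), gr k),
      x = UniversalEnvelopingAlgebra.ι 𝔽 m - algebraMap 𝔽 _ (B f m)})
    (w₁ w₂ : UniversalEnvelopingAlgebra 𝔽 g)
    (hw₂ : ∀ a ∈ (⨆ k ≥ (1 : ℤ), gr k : Submodule 𝔽 g),
      UniversalEnvelopingAlgebra.ι 𝔽 a * w₂ - w₂ * UniversalEnvelopingAlgebra.ι 𝔽 a ∈ I)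
    (s₁ s₂ : ℕ)
    (A : Fin s₁ → UniversalEnvelopingAlgebra 𝔽 g)
    (p : Fin s₁ → UniversalEnvelopingAlgebra 𝔽 g)
    (C : Fin s₂ → UniversalEnvelopingAlgebra 𝔽 g)
    (q : Fin s₂ → UniversalEnvelopingAlgebra 𝔽 g)
    (hp : ∀ a, p a ∈ Algebra.adjoin 𝔽
      ((UniversalEnvelopingAlgebra.ι 𝔽 : g → UniversalEnvelopingAlgebra 𝔽 g) ''
        ((⨆ k ≥ (1 : ℤ), gr k : Submodule 𝔽 g) : Set g)))
    (hexp₁ : w₁ = ∑ a, A a * p a)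
    (hexp₂ : w₂ = ∑ b, C b * q b) :
    w₁ * w₂ - ∑ a, ∑ b, A a * C b * q b * p a ∈ I := by
  replace hI : I = whittakerIdeal gr B f := hI
  subst hI hexp₁
  have hp_comm (a : Fin s₁) : p a * w₂ - w₂ * p a ∈ whittakerIdeal gr B f :=
    Ideal.commutator_mem_of_mem_adjoin
      (Set.image_subset_iff.mpr fun x hx => ι_mem_rightIdealizer_whittakerIdeal hbr horth hf hx)
      (by rintro _ ⟨x, hx, rfl⟩; exact hw₂ x hx) (hp a)
  exact Ideal.sum_mul_sub_sum_sum_mem hexp₂ hp_comm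

/-- Premet: Let `w₁, w₂ ∈ W̃` with finite-sum expansions `w₁ = Σ_a A_a p_a`,
`w₂ = Σ_b B_b q_b`, where `A_a, B_b` lie in the unital subalgebra of `U(g)` generated by
`g_{≤0}` and `p_a, q_b` in the unital subalgebra generated by `g_{≥1/2}`. Then
`w₁·w₂·1̄ = Σ_{a,b} A_a B_b q_b p_a ·1̄` in `M = U(g)/I`, i.e.
`w₁w₂ − Σ_{a,b} A_a B_b q_b p_a ∈ I`. (This expresses that
`ρ : W̃ → U(g_{≤0}) ⊗ F^{op}(g_{1/2})` is an algebra homomorphism.) -/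
theorem stmt_11 {𝔽 : Type*} [Field 𝔽] [CharZero 𝔽]
    {g : Type*} [LieRing g] [LieAlgebra 𝔽 g]
    (B : LinearMap.BilinForm 𝔽 g)
    (hsymm : ∀ x y : g, B x y = B y x)
    (hinvar : ∀ x y z : g, B ⁅x, y⁆ z = B x ⁅y, z⁆)
    (hnondeg : ∀ x : g, (∀ y : g, B x y = 0) → x = 0)
    (gr : ℤ → Submodule 𝔽 g)
    (hds : DirectSum.IsInternal gr)
    (hbr : ∀ (d e : ℤ), ∀ x ∈ gr d, ∀ y ∈ gr e, ⁅x, y⁆ ∈ gr (d + e))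
    (horth : ∀ (d e : ℤ), d + e ≠ 0 → ∀ x ∈ gr d, ∀ y ∈ gr e, B x y = 0)
    (f : g) (hf : f ∈ gr (-2))
    (I : Ideal (UniversalEnvelopingAlgebra 𝔽 g))
    (hI : I = Ideal.span {x | ∃ m ∈ (⨆ k ≥ (2 : ℤ), gr k),
      x = UniversalEnvelopingAlgebra.ι 𝔽 m - algebraMap 𝔽 _ (B f m)})
    (w₁ w₂ : UniversalEnvelopingAlgebra 𝔽 g)
    (hw₁ : ∀ a ∈ (⨆ k ≥ (1 : ℤ), gr k : Submodule 𝔽 g),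
      UniversalEnvelopingAlgebra.ι 𝔽 a * w₁ - w₁ * UniversalEnvelopingAlgebra.ι 𝔽 a ∈ I)
    (hw₂ : ∀ a ∈ (⨆ k ≥ (1 : ℤ), gr k : Submodule 𝔽 g),
      UniversalEnvelopingAlgebra.ι 𝔽 a * w₂ - w₂ * UniversalEnvelopingAlgebra.ι 𝔽 a ∈ I)
    (s₁ s₂ : ℕ)
    (A : Fin s₁ → UniversalEnvelopingAlgebra 𝔽 g)
    (p : Fin s₁ → UniversalEnvelopingAlgebra 𝔽 g)
    (C : Fin s₂ → UniversalEnvelopingAlgebra 𝔽 g)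
    (q : Fin s₂ → UniversalEnvelopingAlgebra 𝔽 g)
    (hA : ∀ a, A a ∈ Algebra.adjoin 𝔽
      ((UniversalEnvelopingAlgebra.ι 𝔽 : g → UniversalEnvelopingAlgebra 𝔽 g) ''
        ((⨆ k ≤ (0 : ℤ), gr k : Submodule 𝔽 g) : Set g)))
    (hC : ∀ b, C b ∈ Algebra.adjoin 𝔽
      ((UniversalEnvelopingAlgebra.ι 𝔽 : g → UniversalEnvelopingAlgebra 𝔽 g) ''
        ((⨆ k ≤ (0 : ℤ), gr k : Submodule 𝔽 g) : Set g)))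
    (hp : ∀ a, p a ∈ Algebra.adjoin 𝔽
      ((UniversalEnvelopingAlgebra.ι 𝔽 : g → UniversalEnvelopingAlgebra 𝔽 g) ''
        ((⨆ k ≥ (1 : ℤ), gr k : Submodule 𝔽 g) : Set g)))
    (hq : ∀ b, q b ∈ Algebra.adjoin 𝔽
      ((UniversalEnvelopingAlgebra.ι 𝔽 : g → UniversalEnvelopingAlgebra 𝔽 g) ''
        ((⨆ k ≥ (1 : ℤ), gr k : Submodule 𝔽 g) : Set g)))
    (hexp₁ : w₁ = ∑ a, A a * p a)
    (hexp₂ : w₂ = ∑ b, C b * q b) :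
    w₁ * w₂ - ∑ a, ∑ b, A a * C b * q b * p a ∈ I :=
  stmt_11_general B gr hbr horth f hf I hI w₁ w₂ hw₂ s₁ s₂ A p C q hp hexp₁ hexp₂
end

section
/- Let g, f, I be as in the general finite W-algebra setup with Kazhdan filtration F_ΔU(g) and F₀I = F₀U(g) ∩ I. If a₁, …, a_ℓ ∈ g are homogeneous, a_t ∈ g_{j_t}, with Σ_{t=1}^ℓ (1 − j_t) ≤ 0, then a₁⋯a_ℓ − (f|a₁)(f|a₂)⋯(f|a_ℓ)·1 ∈ F₀I. (Equivalently, the character ε₀ : F₀U(g) = 𝔽·1 ⊕ F₀I → 𝔽 satisfies ε₀(Σ a₁⋯a_ℓ) = Σ (f|a₁)⋯(f|a_ℓ).) -/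
/-!
Write `κ(a₁⋯a_ℓ) = Σ_t (2 − d_t)`, where `a_t ∈ g_{d_t/2}`, and argue by induction on the length
of a word with `κ ≤ 0`. Such a nonempty word has a letter `p` with `d_p ≥ 2`; move it to the
right end. Each transposition costs a commutator term, which is shorter and has `κ ≤ −2`: by
induction it lies in `I`, and its scalar `Π (f|a_t)` vanishes because `(f|x) = 0` off `g_1`.
Once `p` is last, `w p − c(w) c(p) = w (p − c(p)) + c(p) (w − c(w))` with `c = Π (f|·)`: the first
summand lies in `I`, and the second vanishes unless `d_p = 2`, when `κ(w) ≤ 0` and induction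
applies.
-/

open UniversalEnvelopingAlgebra

namespace KazhdanFiltration

section Degree

variable {L : Type*}

/-- Twice the Kazhdan degree of a word whose letters are tagged with their doubled degrees. -/
def kazhdanDeg (l : List (ℤ × L)) : ℤ := (l.map fun p => 2 - p.1).sum

@[simp] lemma kazhdanDeg_nil : kazhdanDeg ([] : List (ℤ × L)) = 0 := rfl

@[simp] lemma kazhdanDeg_cons (p : ℤ × L) (l : List (ℤ × L)) :
    kazhdanDeg (p :: l) = 2 - p.1 + kazhdanDeg l := by
  simp [kazhdanDeg]

@[simp] lemma kazhdanDeg_append (l₁ l₂ : List (ℤ × L)) :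
    kazhdanDeg (l₁ ++ l₂) = kazhdanDeg l₁ + kazhdanDeg l₂ := by
  simp [kazhdanDeg]

lemma length_le_kazhdanDeg {l : List (ℤ × L)} (h : ∀ p ∈ l, p.1 < 2) :
    (l.length : ℤ) ≤ kazhdanDeg l := by
  induction l with
  | nil => simp
  | cons p l ih =>
    simp only [List.mem_cons, forall_eq_or_imp] at h
    simp only [List.length_cons, Nat.cast_add, Nat.cast_one, kazhdanDeg_cons]
    linarith [ih h.2, h.1]

lemma exists_two_le_of_kazhdanDeg_nonpos {l : List (ℤ × L)} (hl : l ≠ [])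
    (h : kazhdanDeg l ≤ 0) : ∃ p ∈ l, 2 ≤ p.1 := by
  by_contra! hlt
  have := length_le_kazhdanDeg hlt
  have := List.length_pos_iff.mpr hl
  omega

lemma kazhdanDeg_eq_zero_of_forall_eq_two {l : List (ℤ × L)} (h : ∀ p ∈ l, p.1 = 2) :
    kazhdanDeg l = 0 :=
  List.sum_eq_zero fun _ hx => by
    obtain ⟨p, hp, rfl⟩ := List.mem_map.mp hx
    simp [h p hp]

end Degree

def charProd {R L : Type*} [CommMonoid R] (χ : L → R) (l : List (ℤ × L)) : R :=
  (l.map fun p => χ p.2).prod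

lemma charProd_eq_of_perm {R L : Type*} [CommMonoid R] {l l' : List (ℤ × L)} (h : l.Perm l')
    (χ : L → R) :
    charProd χ l = charProd χ l' :=
  (h.map _).prod_eq

variable {R L : Type*} [CommRing R] [LieRing L] [LieAlgebra R L]

def IsHomogeneous (gr : ℤ → Submodule R L) (l : List (ℤ × L)) : Prop := ∀ p ∈ l, p.2 ∈ gr p.1

variable (R) in
def monomial (l : List (ℤ × L)) : UniversalEnvelopingAlgebra R L := (l.map fun p => ι R p.2).prod

lemma charProd_eq_zero {gr : ℤ → Submodule R L} {χ : L → R}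
    (hχ : ∀ d, ∀ x ∈ gr d, d ≠ 2 → χ x = 0) {l : List (ℤ × L)} (hl : IsHomogeneous gr l)
    (hdeg : kazhdanDeg l ≠ 0) : charProd χ l = 0 := by
  obtain ⟨p, hp, hp2⟩ : ∃ p ∈ l, p.1 ≠ 2 := by
    by_contra! h
    exact hdeg (kazhdanDeg_eq_zero_of_forall_eq_two h)
  exact List.prod_eq_zero (List.mem_map.mpr ⟨p, hp, hχ _ _ (hl p hp) hp2⟩)

lemma monomial_append_cons_cons (l₁ l₂ : List (ℤ × L)) (p q : ℤ × L) :
    monomial R (l₁ ++ p :: q :: l₂) = monomial R (l₁ ++ q :: p :: l₂) +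
      monomial R (l₁ ++ (p.1 + q.1, ⁅p.2, q.2⁆) :: l₂) := by
  have hlie : ι R ⁅p.2, q.2⁆ = ι R p.2 * ι R q.2 - ι R q.2 * ι R p.2 := by
    let := LieRing.ofAssociativeRing (A := UniversalEnvelopingAlgebra R L)
    let := LieAlgebra.ofAssociativeAlgebra (R := R) (A := UniversalEnvelopingAlgebra R L)
    rw [LieHom.map_lie, Ring.lie_def]
  simp only [monomial, List.map_append, List.map_cons, List.prod_append, List.prod_cons, hlie]
  noncomm_ring

lemma monomial_append_singleton_sub (χ : L → R) (l : List (ℤ × L)) (p : ℤ × L) :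
    monomial R (l ++ [p]) - algebraMap R _ (charProd χ (l ++ [p])) =
      monomial R l * (ι R p.2 - algebraMap R _ (χ p.2)) +
        χ p.2 • (monomial R l - algebraMap R _ (charProd χ l)) := by
  simp only [monomial, charProd, List.map_append, List.map_cons, List.map_nil, List.prod_append,
    List.prod_cons, List.prod_nil, mul_one, map_mul, mul_sub, Algebra.smul_def,
    Algebra.commutes (χ p.2)]
  noncomm_ring

lemma sub_mem_of_append_singleton {χ : L → R} {I : Ideal (UniversalEnvelopingAlgebra R L)}
    {l : List (ℤ × L)} {p : ℤ × L} (hp : ι R p.2 - algebraMap R _ (χ p.2) ∈ I)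
    (hl : χ p.2 = 0 ∨ monomial R l - algebraMap R _ (charProd χ l) ∈ I) :
    monomial R (l ++ [p]) - algebraMap R _ (charProd χ (l ++ [p])) ∈ I := by
  rw [monomial_append_singleton_sub]
  refine add_mem (I.mul_mem_left _ hp) ?_
  rcases hl with hχ | hl
  · simp [hχ]
  · exact I.smul_of_tower_mem _ hl

variable {gr : ℤ → Submodule R L} {χ : L → R} {I : Ideal (UniversalEnvelopingAlgebra R L)}

@[simp] lemma isHomogeneous_cons {p : ℤ × L} {l : List (ℤ × L)} :
    IsHomogeneous gr (p :: l) ↔ p.2 ∈ gr p.1 ∧ IsHomogeneous gr l :=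
  List.forall_mem_cons

@[simp] lemma isHomogeneous_append {l₁ l₂ : List (ℤ × L)} :
    IsHomogeneous gr (l₁ ++ l₂) ↔ IsHomogeneous gr l₁ ∧ IsHomogeneous gr l₂ :=
  List.forall_mem_append

section Induction

variable (hχ : ∀ d, ∀ x ∈ gr d, d ≠ 2 → χ x = 0)
  (hI : ∀ k, 2 ≤ k → ∀ m ∈ gr k, ι R m - algebraMap R _ (χ m) ∈ I)
  (hbr : ∀ d e, ∀ x ∈ gr d, ∀ y ∈ gr e, ⁅x, y⁆ ∈ gr (d + e))
include hχ hI hbr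

lemma sub_mem_of_append_cons {n : ℕ}
    (ih : ∀ l : List (ℤ × L), l.length < n → IsHomogeneous gr l → kazhdanDeg l ≤ 0 →
      monomial R l - algebraMap R _ (charProd χ l) ∈ I)
    {p : ℤ × L} (hp : 2 ≤ p.1) {l₁ : List (ℤ × L)} (l₂ : List (ℤ × L))
    (hlen : (l₁ ++ p :: l₂).length = n) (hhom : IsHomogeneous gr (l₁ ++ p :: l₂))
    (hdeg : kazhdanDeg (l₁ ++ p :: l₂) ≤ 0) :
    monomial R (l₁ ++ p :: l₂) - algebraMap R _ (charProd χ (l₁ ++ p :: l₂)) ∈ I := by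
  induction l₂ generalizing l₁ with
  | nil =>
    simp only [isHomogeneous_append, isHomogeneous_cons] at hhom
    refine sub_mem_of_append_singleton (hI _ hp _ hhom.2.1) ?_
    by_cases hp2 : p.1 = 2
    · refine .inr (ih l₁ ?_ hhom.1 ?_)
      · simp only [List.length_append, List.length_cons, List.length_nil] at hlen; omega
      · simp only [kazhdanDeg_append, kazhdanDeg_cons, kazhdanDeg_nil] at hdeg; omega
    · exact .inl (hχ _ _ hhom.2.1 hp2)
  | cons q l₂ ih₂ =>
    simp only [isHomogeneous_append, isHomogeneous_cons] at hhom
    set b := l₁ ++ (p.1 + q.1, ⁅p.2, q.2⁆) :: l₂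
    have hb : monomial R b ∈ I := by
      have hbhom : IsHomogeneous gr b := by
        simpa [b, hhom] using hbr _ _ _ hhom.2.1 _ hhom.2.2.1
      have hbdeg : kazhdanDeg b = kazhdanDeg (l₁ ++ p :: q :: l₂) - 2 := by simp [b]; ring
      have hblen : b.length < n := by
        simp only [List.length_append, List.length_cons, b] at hlen ⊢; omega
      have := ih b hblen hbhom (by omega)
      rwa [charProd_eq_zero hχ hbhom (by omega), map_zero, sub_zero] at this
    have hswap : (l₁ ++ p :: q :: l₂).Perm (l₁ ++ q :: p :: l₂) :=
      .append_left l₁ (.swap q p l₂)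
    have hmoved : l₁ ++ q :: p :: l₂ = (l₁ ++ [q]) ++ p :: l₂ := by simp
    rw [monomial_append_cons_cons, charProd_eq_of_perm hswap, add_sub_right_comm, hmoved]
    refine add_mem (ih₂ ?_ ?_ ?_) hb
    · simp only [List.length_append, List.length_cons, List.length_nil] at hlen ⊢; omega
    · simp [hhom]
    · simp only [kazhdanDeg_append, kazhdanDeg_cons, kazhdanDeg_nil] at hdeg ⊢; omega

lemma monomial_sub_mem_of_kazhdanDeg_nonpos (l : List (ℤ × L)) (hl : IsHomogeneous gr l)
    (hdeg : kazhdanDeg l ≤ 0) : monomial R l - algebraMap R _ (charProd χ l) ∈ I := by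
  induction hn : l.length using Nat.strong_induction_on generalizing l with
  | _ n ih =>
  rcases eq_or_ne l [] with rfl | hne
  · simp [monomial, charProd]
  obtain ⟨p, hp, hp2⟩ := exists_two_le_of_kazhdanDeg_nonpos hne hdeg
  obtain ⟨l₁, l₂, rfl⟩ := List.append_of_mem hp
  exact sub_mem_of_append_cons hχ hI hbr (fun l hlt hl hd => ih _ hlt l hl hd rfl) hp2 l₂ hn hl
    hdeg

end Induction

end KazhdanFiltration

open KazhdanFiltration in
theorem stmt_13_general {𝔽 : Type*} [Field 𝔽]
    {g : Type*} [LieRing g] [LieAlgebra 𝔽 g]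
    (B : LinearMap.BilinForm 𝔽 g)
    (gr : ℤ → Submodule 𝔽 g)
    (hbr : ∀ (d e : ℤ), ∀ x ∈ gr d, ∀ y ∈ gr e, ⁅x, y⁆ ∈ gr (d + e))
    (horth : ∀ (d e : ℤ), d + e ≠ 0 → ∀ x ∈ gr d, ∀ y ∈ gr e, B x y = 0)
    (f : g) (hf : f ∈ gr (-2))
    (I : Ideal (UniversalEnvelopingAlgebra 𝔽 g))
    (hI : I = Ideal.span {x | ∃ m ∈ (⨆ k ≥ (2 : ℤ), gr k),
      x = UniversalEnvelopingAlgebra.ι 𝔽 m - algebraMap 𝔽 _ (B f m)})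
    (F : ℤ → Submodule 𝔽 (UniversalEnvelopingAlgebra 𝔽 g))
    (hF : ∀ d : ℤ, F d = Submodule.span 𝔽
      {x | ∃ (s : ℕ) (idx : Fin s → ℤ) (a : Fin s → g),
        (∀ t, a t ∈ gr (idx t)) ∧ (∑ t, (2 - idx t)) ≤ d ∧
        x = (List.ofFn fun t => UniversalEnvelopingAlgebra.ι 𝔽 (a t)).prod})
    (ℓ : ℕ) (idx : Fin ℓ → ℤ) (a : Fin ℓ → g)
    (ha : ∀ t, a t ∈ gr (idx t))
    (hdeg : (∑ t, (2 - idx t)) ≤ 0) :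
    (List.ofFn fun t => UniversalEnvelopingAlgebra.ι 𝔽 (a t)).prod -
        algebraMap 𝔽 (UniversalEnvelopingAlgebra 𝔽 g) (∏ t, B f (a t)) ∈ F 0 ∧
    (List.ofFn fun t => UniversalEnvelopingAlgebra.ι 𝔽 (a t)).prod -
        algebraMap 𝔽 (UniversalEnvelopingAlgebra 𝔽 g) (∏ t, B f (a t)) ∈ I := by
  constructor
  · have hone : (1 : UniversalEnvelopingAlgebra 𝔽 g) ∈ F 0 :=
      hF 0 ▸ Submodule.subset_span ⟨0, Fin.elim0, Fin.elim0, (·.elim0), by simp, by simp⟩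
    rw [Algebra.algebraMap_eq_smul_one]
    exact sub_mem (hF 0 ▸ Submodule.subset_span ⟨ℓ, idx, a, ha, hdeg, rfl⟩)
      (Submodule.smul_mem _ _ hone)
  · have hχ (d : ℤ) (x : g) (hx : x ∈ gr d) (hd : d ≠ 2) : B f x = 0 :=
      horth (-2) d (by omega) f hf x hx
    have hgen (k : ℤ) (hk : 2 ≤ k) (m : g) (hm : m ∈ gr k) :
        UniversalEnvelopingAlgebra.ι 𝔽 m - algebraMap 𝔽 _ (B f m) ∈ I :=
      hI ▸ Ideal.subset_span
        ⟨m, Submodule.mem_iSup_of_mem k (Submodule.mem_iSup_of_mem hk hm), rfl⟩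
    have := monomial_sub_mem_of_kazhdanDeg_nonpos hχ hgen hbr (List.ofFn fun t => (idx t, a t))
      (by simpa [IsHomogeneous, List.mem_ofFn] using ha)
      (by simpa [kazhdanDeg, List.map_ofFn, List.sum_ofFn] using hdeg)
    simpa only [monomial, charProd, List.map_ofFn, List.prod_ofFn, Function.comp_def] using this

/-- If `a₁, …, a_ℓ ∈ g` are homogeneous, `a_t ∈ g_{j_t}` (doubled degree `idx t`),
with `Σ_t (1 − j_t) ≤ 0` (i.e. `Σ_t (2 − idx t) ≤ 0`), then
`a₁⋯a_ℓ − (f|a₁)(f|a₂)⋯(f|a_ℓ)·1 ∈ F₀I = F₀U(g) ∩ I`. -/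
theorem stmt_13 {𝔽 : Type*} [Field 𝔽] [CharZero 𝔽]
    {g : Type*} [LieRing g] [LieAlgebra 𝔽 g]
    (B : LinearMap.BilinForm 𝔽 g)
    (hsymm : ∀ x y : g, B x y = B y x)
    (hinvar : ∀ x y z : g, B ⁅x, y⁆ z = B x ⁅y, z⁆)
    (hnondeg : ∀ x : g, (∀ y : g, B x y = 0) → x = 0)
    (gr : ℤ → Submodule 𝔽 g)
    (hds : DirectSum.IsInternal gr)
    (hbr : ∀ (d e : ℤ), ∀ x ∈ gr d, ∀ y ∈ gr e, ⁅x, y⁆ ∈ gr (d + e))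
    (horth : ∀ (d e : ℤ), d + e ≠ 0 → ∀ x ∈ gr d, ∀ y ∈ gr e, B x y = 0)
    (f : g) (hf : f ∈ gr (-2))
    (I : Ideal (UniversalEnvelopingAlgebra 𝔽 g))
    (hI : I = Ideal.span {x | ∃ m ∈ (⨆ k ≥ (2 : ℤ), gr k),
      x = UniversalEnvelopingAlgebra.ι 𝔽 m - algebraMap 𝔽 _ (B f m)})
    (F : ℤ → Submodule 𝔽 (UniversalEnvelopingAlgebra 𝔽 g))
    (hF : ∀ d : ℤ, F d = Submodule.span 𝔽
      {x | ∃ (s : ℕ) (idx : Fin s → ℤ) (a : Fin s → g),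
        (∀ t, a t ∈ gr (idx t)) ∧ (∑ t, (2 - idx t)) ≤ d ∧
        x = (List.ofFn fun t => UniversalEnvelopingAlgebra.ι 𝔽 (a t)).prod})
    (ℓ : ℕ) (idx : Fin ℓ → ℤ) (a : Fin ℓ → g)
    (ha : ∀ t, a t ∈ gr (idx t))
    (hdeg : (∑ t, (2 - idx t)) ≤ 0) :
    (List.ofFn fun t => UniversalEnvelopingAlgebra.ι 𝔽 (a t)).prod -
        algebraMap 𝔽 (UniversalEnvelopingAlgebra 𝔽 g) (∏ t, B f (a t)) ∈ F 0 ∧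
    (List.ofFn fun t => UniversalEnvelopingAlgebra.ι 𝔽 (a t)).prod -
        algebraMap 𝔽 (UniversalEnvelopingAlgebra 𝔽 g) (∏ t, B f (a t)) ∈ I :=
  stmt_13_general B gr hbr horth f hf I hI F hF ℓ idx a ha hdeg
end
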